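/- Let X, Y, P be lists over an alphabet with X = A ++ B, and suppose P is a subsequence of both X and Y. Then clcsLen X Y P equals the maximum, over all decompositions Y = C ++ D and P = Q ++ R such that Q is a subsequence of both A and C and R is a subsequence of both B and D, of clcsLen A C Q + clcsLen B D R; moreover at least one such decomposition exists. -/

import Mathlib

/-- `Z` is a constrained common subsequence of `X` and `Y` with respect to `P`:
`Z` is a sublist (subsequence) of both `X` and `Y`, and `P` is a sublist of `Z`. -/
def CCS {α : Type*} (X Y P Z : List α) : Prop :=
  Z.Sublist X ∧ Z.Sublist Y ∧ P.Sublist Z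

/-- `Z` is a constrained longest common subsequence of `X` and `Y` with respect to `P`. -/
def CLCS {α : Type*} (X Y P Z : List α) : Prop :=
  CCS X Y P Z ∧ ∀ W : List α, CCS X Y P W → W.length ≤ Z.length

/-- The maximum length of a constrained common subsequence of `X` and `Y`
with respect to `P` (meaningful when some CCS exists). -/
noncomputable def clcsLen {α : Type*} (X Y P : List α) : ℕ :=
  sSup {n | ∃ Z : List α, CCS X Y P Z ∧ Z.length = n}

/-!
A CCS `Z` of `A ++ B` and `Y` splits as `Z₁ ++ Z₂` with `Z₁` a sublist of `A` and `Z₂` of `B`;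
cutting `Y` between the embeddings of `Z₁` and `Z₂`, and `P` between the parts it takes from `Z₁`
and `Z₂`, makes `Z₁` and `Z₂` CCSs of the two halves. Conversely, CCSs of the two halves
concatenate to a CCS of `A ++ B`. Splitting an optimal `Z` gives `≤`, concatenating optimal `Z₁`,
`Z₂` gives `≥`, and splitting `Z = P` gives a decomposition.
-/

section

variable {α : Type*} {X Y P Z : List α}

theorem bddAbove_ccs_length :
    BddAbove {n | ∃ Z : List α, CCS X Y P Z ∧ Z.length = n} :=
  ⟨X.length, fun _ ⟨_, hZ, hn⟩ => hn ▸ hZ.1.length_le⟩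

theorem clcsLen_le_length_left : clcsLen X Y P ≤ X.length :=
  csSup_le' fun _ ⟨_, hZ, hn⟩ => hn ▸ hZ.1.length_le

theorem ccs_self (hX : P.Sublist X) (hY : P.Sublist Y) : CCS X Y P P :=
  ⟨hX, hY, List.Sublist.refl P⟩

theorem exists_ccs_length_eq_clcsLen (hX : P.Sublist X) (hY : P.Sublist Y) :
    ∃ Z, CCS X Y P Z ∧ Z.length = clcsLen X Y P :=
  Nat.sSup_mem (s := {n | ∃ Z : List α, CCS X Y P Z ∧ Z.length = n})
    ⟨P.length, P, ccs_self hX hY, rfl⟩ bddAbove_ccs_length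

namespace CCS

theorem sublist_left (h : CCS X Y P Z) : P.Sublist X := h.2.2.trans h.1

theorem sublist_right (h : CCS X Y P Z) : P.Sublist Y := h.2.2.trans h.2.1

theorem length_le_clcsLen (h : CCS X Y P Z) : Z.length ≤ clcsLen X Y P :=
  le_csSup bddAbove_ccs_length ⟨Z, h, rfl⟩

theorem append {A B C D Q R Z₁ Z₂ : List α} (h₁ : CCS A C Q Z₁) (h₂ : CCS B D R Z₂) :
    CCS (A ++ B) (C ++ D) (Q ++ R) (Z₁ ++ Z₂) :=
  ⟨h₁.1.append h₂.1, h₁.2.1.append h₂.2.1, h₁.2.2.append h₂.2.2⟩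

theorem exists_split_of_append {A B : List α} (h : CCS (A ++ B) Y P Z) :
    ∃ C D Q R Z₁ Z₂, Y = C ++ D ∧ P = Q ++ R ∧ Z = Z₁ ++ Z₂ ∧
      CCS A C Q Z₁ ∧ CCS B D R Z₂ := by
  obtain ⟨Z₁, Z₂, rfl, hZ₁A, hZ₂B⟩ := List.sublist_append_iff.1 h.1
  obtain ⟨C, D, hY, hZ₁C, hZ₂D⟩ := List.append_sublist_iff.1 h.2.1
  obtain ⟨Q, R, hP, hQZ₁, hRZ₂⟩ := List.sublist_append_iff.1 h.2.2
  exact ⟨C, D, Q, R, Z₁, Z₂, hY, hP, rfl, ⟨hZ₁A, hZ₁C, hQZ₁⟩, ⟨hZ₂B, hZ₂D, hRZ₂⟩⟩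

end CCS

end

theorem clcsLen_split {α : Type*} (X Y P A B : List α)
    (hX : X = A ++ B) (h1 : P.Sublist X) (h2 : P.Sublist Y) :
    (∃ C D Q R : List α, Y = C ++ D ∧ P = Q ++ R ∧
        Q.Sublist A ∧ Q.Sublist C ∧ R.Sublist B ∧ R.Sublist D) ∧
    clcsLen X Y P =
      sSup {n : ℕ | ∃ C D Q R : List α, Y = C ++ D ∧ P = Q ++ R ∧
        Q.Sublist A ∧ Q.Sublist C ∧ R.Sublist B ∧ R.Sublist D ∧
        n = clcsLen A C Q + clcsLen B D R} := by
  subst hX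
  obtain ⟨C, D, Q, R, Z₁, Z₂, hY, hP, -, hQ, hR⟩ := (ccs_self h1 h2).exists_split_of_append
  refine ⟨⟨C, D, Q, R, hY, hP, hQ.sublist_left, hQ.sublist_right, hR.sublist_left,
    hR.sublist_right⟩, le_antisymm ?_ ?_⟩
  · obtain ⟨Z, hZ, hlen⟩ := exists_ccs_length_eq_clcsLen h1 h2
    obtain ⟨C, D, Q, R, Z₁, Z₂, hY, hP, rfl, hZ₁, hZ₂⟩ := hZ.exists_split_of_append
    refine le_csSup_of_le ⟨A.length + B.length, ?_⟩ ⟨C, D, Q, R, hY, hP, hZ₁.sublist_left,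
      hZ₁.sublist_right, hZ₂.sublist_left, hZ₂.sublist_right, rfl⟩ ?_
    · rintro _ ⟨-, -, -, -, -, -, -, -, -, -, rfl⟩
      exact add_le_add clcsLen_le_length_left clcsLen_le_length_left
    · rw [← hlen, List.length_append]
      exact add_le_add hZ₁.length_le_clcsLen hZ₂.length_le_clcsLen
  · refine csSup_le' ?_
    rintro _ ⟨C, D, Q, R, rfl, rfl, hQA, hQC, hRB, hRD, rfl⟩
    obtain ⟨Z₁, hZ₁, hl₁⟩ := exists_ccs_length_eq_clcsLen hQA hQC
    obtain ⟨Z₂, hZ₂, hl₂⟩ := exists_ccs_length_eq_clcsLen hRB hRD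
    calc clcsLen A C Q + clcsLen B D R = (Z₁ ++ Z₂).length := by
          rw [List.length_append, hl₁, hl₂]
      _ ≤ _ := (hZ₁.append hZ₂).length_le_clcsLen
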